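/- arXiv:math/0201042 — 7 statements merged into one kernel-verified Lean document; each statement's English description precedes it below -/
import Mathlib

section
/- If I is a Poisson ideal of a commutative Poisson algebra Z over a field of characteristic zero (i.e., {Z, I} ⊆ I), then the radical √I is also a Poisson ideal of Z. -/
/-- If `I` is a Poisson ideal of a commutative Poisson algebra `Z` over a field of
characteristic zero, then the radical `√I` is also a Poisson ideal of `Z`. -/
theorem radical_of_poisson_ideal_is_poisson
    (k : Type*) [Field k] [CharZero k]
    (Z : Type*) [CommRing Z] [Algebra k Z]
    (bracket : Z → Z → Z)
    (hadd_l : ∀ a b c : Z, bracket (a + b) c = bracket a c + bracket b c)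
    (hadd_r : ∀ a b c : Z, bracket a (b + c) = bracket a b + bracket a c)
    (hsmul_l : ∀ (r : k) (a b : Z), bracket (r • a) b = r • bracket a b)
    (hsmul_r : ∀ (r : k) (a b : Z), bracket a (r • b) = r • bracket a b)
    (hleib_r : ∀ a b c : Z, bracket a (b * c) = bracket a b * c + b * bracket a c)
    (hanti : ∀ a b : Z, bracket a b = - bracket b a)
    (hjac : ∀ a b c : Z,
      bracket a (bracket b c) + bracket b (bracket c a) + bracket c (bracket a b) = 0)
    (I : Ideal Z) (hI : ∀ z : Z, ∀ a ∈ I, bracket z a ∈ I) :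
    ∀ z : Z, ∀ a ∈ I.radical, bracket z a ∈ I.radical := by
  intro z a ha
  obtain ⟨n, hn⟩ := ha
  set D := bracket z with hD
  have hleibD : ∀ b c : Z, D (b * c) = D b * c + b * D c := fun b c => hleib_r z b c
  have D1 : D 1 = 0 := by
    have h := hleibD 1 1
    simp only [mul_one, one_mul] at h
    exact (left_eq_add.mp h)
  have Dpow : ∀ (x : Z) (m : ℕ), D (x ^ (m + 1)) = ((m : Z) + 1) * (x ^ m * D x) := by
    intro x m
    induction m with
    | zero => simp [pow_one]
    | succ m ih =>
      have hx : x ^ (m + 1 + 1) = x * x ^ (m + 1) := by ring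
      rw [hx, hleibD, ih]
      push_cast
      ring
  have cancel : ∀ (m : ℕ), m ≠ 0 → ∀ x : Z, (m : Z) * x ∈ I → x ∈ I := by
    intro m hm x hx
    have hmk : (m : k) ≠ 0 := by exact_mod_cast hm
    have key0 : (algebraMap k Z) ((m : k)⁻¹) * ((m : Z) * x) = x := by
      rw [← mul_assoc, ← map_natCast (algebraMap k Z) m, ← map_mul,
        inv_mul_cancel₀ hmk, map_one, one_mul]
    rw [← key0]
    exact I.mul_mem_left _ hx
  have key : ∀ j, j ≤ n → a ^ (n - j) * D a ^ (2 * j) ∈ I := by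
    intro j
    induction j with
    | zero => intro _; simpa using hn
    | succ j ih =>
      intro hj
      have hj' : j ≤ n := Nat.le_of_succ_le hj
      have hmem := ih hj'
      have hDmem : D (a ^ (n - j) * D a ^ (2 * j)) ∈ I := hI z _ hmem
      rw [hleibD] at hDmem
      have hnj : n - j = (n - (j + 1)) + 1 := by omega
      rw [hnj, Dpow] at hDmem
      have hT : (((n - (j + 1) : ℕ) : Z) + 1) * (a ^ (n - (j + 1)) * D a) * D a ^ (2 * j) * D a
          + a ^ ((n - (j + 1)) + 1) * D (D a ^ (2 * j)) * D a ∈ I := by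
        have := I.mul_mem_right (D a) hDmem
        rw [add_mul] at this
        exact this
      have hsecond : a ^ ((n - (j + 1)) + 1) * D (D a ^ (2 * j)) * D a ∈ I := by
        rcases Nat.eq_zero_or_pos j with hj0 | hjpos
        · subst hj0
          simp [D1]
        · obtain ⟨m, hm⟩ : ∃ m, 2 * j = m + 1 := ⟨2 * j - 1, by omega⟩
          rw [hm, Dpow]
          have heq : a ^ ((n - (j + 1)) + 1) * (((m : Z) + 1)
              * (D a ^ m * D (D a))) * D a
              = ((m : Z) + 1) * D (D a)
                * (a ^ (n - j) * D a ^ (m + 1)) := by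
            rw [hnj]; ring
          rw [heq, ← hm]
          exact I.mul_mem_left _ hmem
      have hfirst : (((n - (j + 1) : ℕ) : Z) + 1) * (a ^ (n - (j + 1)) * D a) * D a ^ (2 * j) * D a ∈ I := by
        have := I.sub_mem hT hsecond
        simpa using this
      have heq2 : (((n - (j + 1) : ℕ) : Z) + 1) * (a ^ (n - (j + 1)) * D a) * D a ^ (2 * j) * D a
          = ((n - j : ℕ) : Z) * (a ^ (n - (j + 1)) * D a ^ (2 * (j + 1))) := by
        rw [hnj]
        push_cast
        ring
      rw [heq2] at hfirst
      exact cancel (n - j) (by omega) _ hfirst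
  have hfin := key n le_rfl
  simp only [Nat.sub_self, pow_zero, one_mul] at hfin
  exact ⟨2 * n, hfin⟩
end

section
/- If I is a Poisson ideal of a commutative Noetherian Poisson algebra Z over a field of characteristic zero, then every minimal prime ideal of Z over I is also a Poisson ideal. -/
/-!
For fixed `z`, the map `{z, -}` satisfies the Leibniz rule, so the theorem is an instance of a
fact about Leibniz maps `D`. Over `ℚ`, the radical of a `D`-stable ideal `I` is `D`-stable
(Seidenberg): from `a ^ (m + 1) * (D a) ^ (j + 1) ∈ I`, differentiating and multiplying by `D a`
gives `a ^ m * (D a) ^ (j + 3) ∈ I`, so starting from `a ^ (m + 1) ∈ I` one reaches a power of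
`D a` in `I`. If `P` is a minimal prime over `I` and `a ∈ P`, some `s ∉ P` has `s * a ∈ √I`;
then `D (s * a) = D s * a + s * D a ∈ √I ⊆ P` forces `D a ∈ P`.
-/

namespace Ideal

variable {R : Type*} [CommRing R]

theorem exists_notMem_mul_mem_radical_of_mem_minimalPrimes {I P : Ideal R}
    (hP : P ∈ I.minimalPrimes) {a : R} (ha : a ∈ P) : ∃ s ∉ P, s * a ∈ I.radical := by
  have := hP.isPrime
  by_contra! h
  -- Otherwise a prime over `I` avoiding both `Pᶜ` and the powers of `a` lies strictly below `P`.
  have hdisj : Disjoint (I : Set R) (P.primeCompl ⊔ Submonoid.powers a : Submonoid R) := by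
    refine Set.disjoint_left.mpr fun x hxI hx => ?_
    obtain ⟨s, hs, _, ⟨n, rfl⟩, rfl⟩ := Submonoid.mem_sup.mp hx
    refine h s hs ⟨n + 1, ?_⟩
    rw [show (s * a) ^ (n + 1) = s ^ n * a * (s * a ^ n) by ring]
    exact I.mul_mem_left _ hxI
  obtain ⟨Q, hQ, hIQ, hQdisj⟩ := exists_le_prime_disjoint I _ hdisj
  have hQP : Q ≤ P := fun x hxQ => by
    by_contra hxP
    exact Set.disjoint_left.mp hQdisj hxQ (Submonoid.mem_sup_left (S := P.primeCompl) hxP)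
  have haQ : a ∈ Q := hP.2 ⟨hQ, hIQ⟩ hQP ha
  exact Set.disjoint_left.mp hQdisj haQ (Submonoid.mem_sup_right (Submonoid.mem_powers a))

theorem mem_of_natCast_mul_mem [Algebra ℚ R] (I : Ideal R) {n : ℕ} (hn : n ≠ 0) {x : R}
    (h : (n : R) * x ∈ I) : x ∈ I := by
  have hunit : IsUnit (n : R) := by
    simpa using (IsUnit.mk0 (n : ℚ) (Nat.cast_ne_zero.mpr hn)).map (algebraMap ℚ R)
  exact (I.unit_mul_mem_iff_mem hunit).mp h

end Ideal

section Leibniz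

variable {R : Type*} [CommRing R] {D : R → R}

theorem leibniz_pow_succ (hD : ∀ a b, D (a * b) = D a * b + a * D b) (a : R) (n : ℕ) :
    D (a ^ (n + 1)) = (n + 1 : ℕ) * (a ^ n * D a) := by
  induction n with
  | zero => simp
  | succ n ih =>
    rw [pow_succ, hD, ih]
    push_cast
    ring

variable [Algebra ℚ R] {I : Ideal R}

theorem pow_mul_leibniz_pow_mem_of_pow_succ_mul_mem
    (hD : ∀ a b, D (a * b) = D a * b + a * D b) (hI : ∀ x ∈ I, D x ∈ I) {a : R} {m j : ℕ}
    (h : a ^ (m + 1) * D a ^ (j + 1) ∈ I) : a ^ m * D a ^ (j + 3) ∈ I := by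
  have hDa : D (a ^ (m + 1) * D a ^ (j + 1)) * D a ∈ I := I.mul_mem_right _ (hI _ h)
  rw [hD, leibniz_pow_succ hD, leibniz_pow_succ hD] at hDa
  have hrest : ((j + 1 : ℕ) : R) * D (D a) * (a ^ (m + 1) * D a ^ (j + 1)) ∈ I :=
    I.mul_mem_left _ h
  have hsum : ((m + 1 : ℕ) : R) * (a ^ m * D a ^ (j + 3)) =
      ((m + 1 : ℕ) * (a ^ m * D a) * D a ^ (j + 1) +
        a ^ (m + 1) * ((j + 1 : ℕ) * (D a ^ j * D (D a)))) * D a -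
      ((j + 1 : ℕ) : R) * D (D a) * (a ^ (m + 1) * D a ^ (j + 1)) := by
    ring
  exact I.mem_of_natCast_mul_mem m.succ_ne_zero (hsum ▸ I.sub_mem hDa hrest)

theorem leibniz_mem_radical_of_pow_mul_mem
    (hD : ∀ a b, D (a * b) = D a * b + a * D b) (hI : ∀ x ∈ I, D x ∈ I) {a : R} :
    ∀ {m j : ℕ}, a ^ m * D a ^ (j + 1) ∈ I → D a ∈ I.radical
  | 0, j, h => ⟨j + 1, by simpa using h⟩
  | _ + 1, _, h => leibniz_mem_radical_of_pow_mul_mem hD hI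
      (pow_mul_leibniz_pow_mem_of_pow_succ_mul_mem hD hI h)

theorem leibniz_mem_radical (hD : ∀ a b, D (a * b) = D a * b + a * D b)
    (hI : ∀ x ∈ I, D x ∈ I) {a : R} (ha : a ∈ I.radical) : D a ∈ I.radical := by
  obtain ⟨n, hn⟩ := ha
  cases n with
  | zero =>
    simp [I.eq_top_of_isUnit_mem hn (by simp), Ideal.radical_top]
  | succ m =>
    have hDa : ((m + 1 : ℕ) : R) * (a ^ m * D a) ∈ I := leibniz_pow_succ hD a m ▸ hI _ hn
    exact leibniz_mem_radical_of_pow_mul_mem hD hI (j := 0)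
      (by simpa using I.mem_of_natCast_mul_mem m.succ_ne_zero hDa)

theorem leibniz_mem_of_mem_minimalPrimes (hD : ∀ a b, D (a * b) = D a * b + a * D b)
    (hI : ∀ x ∈ I, D x ∈ I) {P : Ideal R} (hP : P ∈ I.minimalPrimes) {a : R} (ha : a ∈ P) :
    D a ∈ P := by
  have hP' := hP.isPrime
  obtain ⟨s, hsP, hsa⟩ := Ideal.exists_notMem_mul_mem_radical_of_mem_minimalPrimes hP ha
  have hDsa : D s * a + s * D a ∈ P :=
    hD s a ▸ hP'.radical_le_iff.mpr hP.1.2 (leibniz_mem_radical hD hI hsa)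
  have hsDa : s * D a ∈ P := by
    simpa using P.sub_mem hDsa (P.mul_mem_left (D s) ha)
  exact (hP'.mem_or_mem hsDa).resolve_left hsP

end Leibniz

theorem minimal_primes_over_poisson_ideal_are_poisson_general
    (k : Type*) [Field k] [CharZero k]
    (Z : Type*) [CommRing Z] [Algebra k Z]
    (bracket : Z → Z → Z)
    (hleib_r : ∀ a b c : Z, bracket a (b * c) = bracket a b * c + b * bracket a c)
    (I : Ideal Z) (hI : ∀ z : Z, ∀ a ∈ I, bracket z a ∈ I) :
    ∀ P ∈ I.minimalPrimes, ∀ z : Z, ∀ a ∈ P, bracket z a ∈ P := by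
  let _ : Algebra ℚ Z := ((algebraMap k Z).comp (algebraMap ℚ k)).toAlgebra
  intro P hP z a ha
  exact leibniz_mem_of_mem_minimalPrimes (hleib_r z) (hI z) hP ha

/-- If `I` is a Poisson ideal of a commutative Noetherian Poisson algebra `Z` over a field
of characteristic zero, then every minimal prime of `Z` over `I` is also a Poisson ideal. -/
theorem minimal_primes_over_poisson_ideal_are_poisson
    (k : Type*) [Field k] [CharZero k]
    (Z : Type*) [CommRing Z] [Algebra k Z] [IsNoetherianRing Z]
    (bracket : Z → Z → Z)
    (hadd_l : ∀ a b c : Z, bracket (a + b) c = bracket a c + bracket b c)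
    (hadd_r : ∀ a b c : Z, bracket a (b + c) = bracket a b + bracket a c)
    (hsmul_l : ∀ (r : k) (a b : Z), bracket (r • a) b = r • bracket a b)
    (hsmul_r : ∀ (r : k) (a b : Z), bracket a (r • b) = r • bracket a b)
    (hleib_r : ∀ a b c : Z, bracket a (b * c) = bracket a b * c + b * bracket a c)
    (hanti : ∀ a b : Z, bracket a b = - bracket b a)
    (hjac : ∀ a b c : Z,
      bracket a (bracket b c) + bracket b (bracket c a) + bracket c (bracket a b) = 0)
    (I : Ideal Z) (hI : ∀ z : Z, ∀ a ∈ I, bracket z a ∈ I) :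
    ∀ P ∈ I.minimalPrimes, ∀ z : Z, ∀ a ∈ P, bracket z a ∈ P :=
  minimal_primes_over_poisson_ideal_are_poisson_general k Z bracket hleib_r I hI
end

section
/- Let A be an algebra finitely generated as a module over a central subalgebra Z₀. If J is a semiprime ideal of Z₀, then JA ∩ Z₀ = J; that is, contraction composed with extension is the identity on semiprime ideals of Z₀. -/
/-- Let `A` be an algebra finitely generated as a module over a central subalgebra `Z₀`.
If `J` is a semiprime ideal of `Z₀`, then `JA ∩ Z₀ = J`: contraction composed with
extension is the identity on semiprime ideals of `Z₀`. -/
theorem contraction_extension_semiprime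
    (Z₀ : Type*) [CommRing Z₀] (A : Type*) [Ring A] [Algebra Z₀ A]
    [Module.Finite Z₀ A]
    (hinj : Function.Injective (algebraMap Z₀ A))
    (J : Ideal Z₀) (hJ : J.IsRadical) :
    (J.map (algebraMap Z₀ A)).comap (algebraMap Z₀ A) = J := by
  refine le_antisymm (fun x hx => ?_) Ideal.le_comap_map
  rw [Ideal.mem_comap] at hx
  -- `J • ⊤` as a `Z₀`-submodule of `A`; it is a left ideal of `A`
  set N : Submodule Z₀ A := J • ⊤ with hN
  have hNmul : ∀ a : A, ∀ m ∈ N, a * m ∈ N := by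
    intro a m hm
    refine Submodule.smul_induction_on hm (fun j hj b _ => ?_) (fun u v hu hv => ?_)
    · rw [mul_smul_comm]
      exact Submodule.smul_mem_smul hj trivial
    · rw [mul_add]; exact N.add_mem hu hv
  -- package `N` as a (left) ideal of `A`
  let I : Ideal A :=
    { carrier := N
      add_mem' := fun hu hv => N.add_mem hu hv
      zero_mem' := N.zero_mem
      smul_mem' := fun a m hm => hNmul a m hm }
  have hmapI : J.map (algebraMap Z₀ A) ≤ I := by
    rw [Ideal.map_le_iff_le_comap]
    intro j hj
    show algebraMap Z₀ A j ∈ N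
    have : algebraMap Z₀ A j = j • (1 : A) := by
      rw [Algebra.algebraMap_eq_smul_one]
    rw [this]
    exact Submodule.smul_mem_smul hj trivial
  have hxN : algebraMap Z₀ A x ∈ N := hmapI hx
  -- the scalar endomorphism given by `x`
  set f : Module.End Z₀ A := algebraMap Z₀ (Module.End Z₀ A) x with hf
  have hrange : LinearMap.range f ≤ J • (⊤ : Submodule Z₀ A) := by
    rintro _ ⟨m, rfl⟩
    show x • m ∈ N
    have : x • m = m * algebraMap Z₀ A x := by
      rw [Algebra.smul_def, Algebra.commutes]
    rw [this]
    exact hNmul m _ hxN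
  obtain ⟨p, hmonic, -, hcoeff, haeval⟩ :=
    LinearMap.exists_monic_and_coeff_mem_pow_and_aeval_eq_zero_of_range_le_smul Z₀ f J hrange
  -- from `aeval f p = 0` deduce `p.eval x = 0`
  have heval : p.eval x = 0 := by
    have h1 : Polynomial.aeval f p = algebraMap Z₀ (Module.End Z₀ A) (p.eval x) := by
      rw [hf, Polynomial.aeval_algebraMap_apply, Polynomial.aeval_def, Polynomial.eval₂_eq_eval_map]
      simp
    rw [haeval] at h1
    have h2 : algebraMap Z₀ A (p.eval x) = 0 := by
      have := congrArg (fun g : Module.End Z₀ A => g 1) h1.symm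
      simpa [Module.algebraMap_end_apply, Algebra.algebraMap_eq_smul_one] using this
    exact hinj (by rw [h2, map_zero])
  -- deduce `x ^ p.natDegree ∈ J`
  set n := p.natDegree with hn
  rcases Nat.eq_zero_or_pos n with hn0 | hnpos
  · -- degree 0: `p = 1`, so `1 = 0` in `Z₀` and everything is in `J`
    have : p = 1 := Polynomial.eq_one_of_monic_natDegree_zero hmonic hn0
    rw [this] at heval
    simp at heval
    have : x = 0 := by
      calc x = x * 1 := (mul_one x).symm
        _ = x * 0 := by rw [heval]
        _ = 0 := mul_zero x
    rw [this]; exact J.zero_mem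
  · have hpow : x ^ n ∈ J := by
      have hsum : p.eval x = (∑ i ∈ Finset.range n, p.coeff i * x ^ i) + x ^ n := by
        rw [Polynomial.eval_eq_sum_range, Finset.sum_range_succ, hmonic.coeff_natDegree, one_mul]
      have : x ^ n = -(∑ i ∈ Finset.range n, p.coeff i * x ^ i) := by
        rw [hsum] at heval; linear_combination heval
      rw [this]
      refine J.neg_mem (Ideal.sum_mem _ fun i hi => ?_)
      have hiJ : p.coeff i ∈ J := by
        have := hcoeff i
        have hle : J ^ (n - i) ≤ J :=
          Ideal.pow_le_self (Nat.sub_ne_zero_of_lt (Finset.mem_range.mp hi))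
        exact hle this
      exact J.mul_mem_right _ hiJ
    exact hJ ⟨n, hpow⟩
end

section
/- If I is a prime ideal of a commutative Poisson algebra Z₀ over a field of characteristic 0, then the Poisson core P(I) of I is a prime Poisson ideal. -/
/-!
Each bracket `{z, -}` is a derivation, so `P` is the largest ideal inside `I` stable under a
family of derivations. In characteristic zero the radical of a differential ideal is
differential (Kaplansky's trick: `a ^ n ∈ P` forces `(D a) ^ (2 n) ∈ P`), and hence so is every
minimal prime `p` over it: for `a ∈ p` some `s ∉ p` has `s a` in the radical, and
`D (s a) = s D a + a D s`. A minimal prime over `P` lying in `I` is then differential, so it is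
contained in `P` by maximality, and equals `P`.
-/

namespace Ideal

variable {R : Type*} [CommRing R]

theorem mem_of_nsmul_mem [Algebra ℚ R] (I : Ideal R) {n : ℕ} (hn : n ≠ 0) {x : R}
    (h : n • x ∈ I) : x ∈ I := by
  have hunit : IsUnit (n : R) := by
    simpa only [map_natCast] using
      (isUnit_iff_ne_zero.mpr (Nat.cast_ne_zero.mpr hn : (n : ℚ) ≠ 0)).map (algebraMap ℚ R)
  rwa [nsmul_eq_mul, unit_mul_mem_iff_mem I hunit] at h

theorem exists_mul_pow_mem_of_mem_minimalPrimes {I p : Ideal R} (hp : p ∈ I.minimalPrimes)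
    {a : R} (ha : a ∈ p) : ∃ s ∉ p, ∃ n : ℕ, s * a ^ n ∈ I := by
  have hpprime : p.IsPrime := IsMinimalPrime.isPrime hp
  by_contra! h
  have hdisj : Disjoint (I : Set R) (p.primeCompl ⊔ Submonoid.powers a : Submonoid R) := by
    refine Set.disjoint_right.mpr fun x hx hxI => ?_
    obtain ⟨s, hs, _, ⟨n, rfl⟩, rfl⟩ := Submonoid.mem_sup.mp hx
    exact h s hs n hxI
  obtain ⟨q, hq, hIq, hqM⟩ := exists_le_prime_disjoint I _ hdisj
  have hqp : q ≤ p := fun x hxq => by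
    by_contra hxp
    exact Set.disjoint_left.mp hqM hxq (Submonoid.mem_sup_left hxp)
  have haq : a ∈ q := hp.2 ⟨hq, hIq⟩ hqp ha
  exact Set.disjoint_left.mp hqM haq (Submonoid.mem_sup_right (Submonoid.mem_powers a))

end Ideal

namespace Derivation

variable {A R : Type*} [CommSemiring A] [CommRing R] [Algebra A R] (D : Derivation A R R)

theorem mul_apply_pow (a : R) (n : ℕ) : a * D (a ^ n) = n • (a ^ n * D a) := by
  cases n with
  | zero => simp
  | succ n => rw [leibniz_pow, Nat.add_sub_cancel, smul_eq_mul, nsmul_eq_mul, nsmul_eq_mul]; ring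

variable [Algebra ℚ R] {P : Ideal R} (hP : ∀ x ∈ P, D x ∈ P)
include hP

theorem pow_apply_mem_of_pow_mul_mem (a : R) (j : ℕ) :
    ∀ m : ℕ, a ^ j * (D a) ^ m ∈ P → (D a) ^ (m + 2 * j) ∈ P := by
  induction j with
  | zero => simp
  | succ j ih =>
    intro m h
    set d := D a
    have hexpand : D (a ^ (j + 1) * d ^ m) * d
        = (j + 1) • (a ^ j * d ^ (m + 2)) + m • (a ^ (j + 1) * d ^ m * D d) :=
      calc D (a ^ (j + 1) * d ^ m) * d
          = a ^ (j + 1) * (d * D (d ^ m)) + d ^ m * D (a ^ (j + 1)) * d := by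
            rw [leibniz, smul_eq_mul, smul_eq_mul]; ring
        _ = _ := by
            rw [D.mul_apply_pow, leibniz_pow, Nat.add_sub_cancel]
            simp only [smul_eq_mul, nsmul_eq_mul]
            push_cast
            ring
    have hlast : m • (a ^ (j + 1) * d ^ m * D d) ∈ P :=
      P.nsmul_mem (P.mul_mem_right _ h) m
    have hfirst : (j + 1) • (a ^ j * d ^ (m + 2)) ∈ P := by
      have := P.sub_mem (P.mul_mem_right d (hP _ h)) hlast
      rwa [hexpand, add_sub_cancel_right] at this
    have := ih (m + 2) (P.mem_of_nsmul_mem j.succ_ne_zero hfirst)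
    rwa [show m + 2 + 2 * j = m + 2 * (j + 1) by ring] at this

theorem apply_mem_radical {x : R} (hx : x ∈ P.radical) : D x ∈ P.radical := by
  obtain ⟨n, hn⟩ := hx
  exact ⟨0 + 2 * n, D.pow_apply_mem_of_pow_mul_mem hP x n 0 (by simpa using hn)⟩

theorem apply_mem_of_mem_minimalPrimes {p : Ideal R} (hp : p ∈ P.minimalPrimes) {a : R}
    (ha : a ∈ p) : D a ∈ p := by
  have hpprime := Ideal.IsMinimalPrime.isPrime hp
  obtain ⟨s, hs, n, hsa⟩ := Ideal.exists_mul_pow_mem_of_mem_minimalPrimes hp ha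
  have hrad : s * a ∈ P.radical :=
    ⟨n + 1, by
      rw [show (s * a) ^ (n + 1) = s ^ n * a * (s * a ^ n) by ring]
      exact P.mul_mem_left _ hsa⟩
  have hD : D (s * a) ∈ p := hpprime.radical_le_iff.mpr hp.1.2 (D.apply_mem_radical hP hrad)
  rw [leibniz, smul_eq_mul, smul_eq_mul] at hD
  have hsDa : s * D a ∈ p := by
    simpa using p.sub_mem hD (p.mul_mem_right (D s) ha)
  exact (hpprime.mem_or_mem hsDa).resolve_left hs

end Derivation

theorem Ideal.IsPrime.of_isMax_differential {ι A R : Type*} [CommSemiring A] [CommRing R]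
    [Algebra A R] [Algebra ℚ R] (D : ι → Derivation A R R) {I P : Ideal R} [I.IsPrime]
    (hP : ∀ i, ∀ x ∈ P, D i x ∈ P) (hPI : P ≤ I)
    (hmax : ∀ Q : Ideal R, (∀ i, ∀ x ∈ Q, D i x ∈ Q) → Q ≤ I → Q ≤ P) : P.IsPrime := by
  obtain ⟨p, hp, hpI⟩ := Ideal.exists_minimalPrimes_le hPI
  have hpP : p ≤ P := hmax p (fun i _ => (D i).apply_mem_of_mem_minimalPrimes (hP i) hp) hpI
  exact le_antisymm hp.1.2 hpP ▸ Ideal.IsMinimalPrime.isPrime hp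

def Derivation.ofAddLeibniz {R : Type*} [CommRing R] (f : R → R)
    (hadd : ∀ a b, f (a + b) = f a + f b) (hleib : ∀ a b, f (a * b) = f a * b + a * f b) :
    Derivation ℤ R R :=
  Derivation.mk' (AddMonoidHom.mk' f hadd).toIntLinearMap fun a b => by
    simp only [AddMonoidHom.coe_toIntLinearMap, AddMonoidHom.mk'_apply, smul_eq_mul, hleib]
    ring

theorem poisson_core_of_prime_is_prime_general
    (k : Type*) [Field k] [CharZero k]
    (Z₀ : Type*) [CommRing Z₀] [Algebra k Z₀]
    (bracket : Z₀ → Z₀ → Z₀)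
    (hadd_r : ∀ a b c : Z₀, bracket a (b + c) = bracket a b + bracket a c)
    (hleib_r : ∀ a b c : Z₀, bracket a (b * c) = bracket a b * c + b * bracket a c)
    (I : Ideal Z₀) (hIprime : I.IsPrime)
    (P : Ideal Z₀)
    (hPpoisson : ∀ z : Z₀, ∀ a ∈ P, bracket z a ∈ P)
    (hPle : P ≤ I)
    (hPmax : ∀ Q : Ideal Z₀, (∀ z : Z₀, ∀ a ∈ Q, bracket z a ∈ Q) → Q ≤ I → Q ≤ P) :
    P.IsPrime := by
  let _ : Algebra ℚ Z₀ := ((algebraMap k Z₀).comp (algebraMap ℚ k)).toAlgebra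
  exact hIprime.of_isMax_differential
    (fun z => Derivation.ofAddLeibniz (bracket z) (hadd_r z) (hleib_r z)) hPpoisson hPle hPmax

/-- If `I` is a prime ideal of a commutative Noetherian Poisson algebra `Z₀` over a field of
characteristic `0`, then the Poisson core `P` of `I` (the largest Poisson ideal contained
in `I`) is a prime Poisson ideal. -/
theorem poisson_core_of_prime_is_prime
    (k : Type*) [Field k] [CharZero k]
    (Z₀ : Type*) [CommRing Z₀] [Algebra k Z₀] [IsNoetherianRing Z₀]
    (bracket : Z₀ → Z₀ → Z₀)
    (hadd_l : ∀ a b c : Z₀, bracket (a + b) c = bracket a c + bracket b c)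
    (hadd_r : ∀ a b c : Z₀, bracket a (b + c) = bracket a b + bracket a c)
    (hsmul_l : ∀ (r : k) (a b : Z₀), bracket (r • a) b = r • bracket a b)
    (hsmul_r : ∀ (r : k) (a b : Z₀), bracket a (r • b) = r • bracket a b)
    (hleib_r : ∀ a b c : Z₀, bracket a (b * c) = bracket a b * c + b * bracket a c)
    (hanti : ∀ a b : Z₀, bracket a b = - bracket b a)
    (hjac : ∀ a b c : Z₀,
      bracket a (bracket b c) + bracket b (bracket c a) + bracket c (bracket a b) = 0)
    (I : Ideal Z₀) (hIprime : I.IsPrime)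
    (P : Ideal Z₀)
    (hPpoisson : ∀ z : Z₀, ∀ a ∈ P, bracket z a ∈ P)
    (hPle : P ≤ I)
    (hPmax : ∀ Q : Ideal Z₀, (∀ z : Z₀, ∀ a ∈ Q, bracket z a ∈ Q) → Q ≤ I → Q ≤ P) :
    P.IsPrime :=
  poisson_core_of_prime_is_prime_general k Z₀ bracket hadd_r hleib_r I hIprime P hPpoisson hPle
    hPmax
end

section
/- In an affine commutative Poisson algebra over a field, every prime Poisson ideal is an intersection of Poisson primitive ideals (Poisson cores of maximal ideals). -/
/-!
The Poisson core of an ideal `m`, the largest Poisson ideal inside `m`, exists because a sum of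
Poisson ideals is again Poisson. A Poisson ideal `p ≤ m` lies in the core of `m`, so `p` lies in
the intersection of the cores of the maximal ideals containing it; that intersection in turn lies in
the intersection of those maximal ideals, which is `p` itself for a radical ideal of a Jacobson ring,
such as a finitely generated algebra over a field.
-/

namespace Poisson

variable {R : Type*} [CommRing R] (bracket : R → R → R)

def IsPoissonIdeal (I : Ideal R) : Prop :=
  ∀ z : R, ∀ a ∈ I, bracket z a ∈ I

def poissonCore (m : Ideal R) : Ideal R :=
  sSup {Q : Ideal R | IsPoissonIdeal bracket Q ∧ Q ≤ m}

variable {bracket}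

theorem bracket_zero (hadd_r : ∀ a b c : R, bracket a (b + c) = bracket a b + bracket a c)
    (z : R) : bracket z 0 = 0 := by
  simpa using hadd_r z 0 0

theorem isPoissonIdeal_sSup (hadd_r : ∀ a b c : R, bracket a (b + c) = bracket a b + bracket a c)
    {s : Set (Ideal R)} (hs : ∀ I ∈ s, IsPoissonIdeal bracket I) :
    IsPoissonIdeal bracket (sSup s) := by
  intro z a ha
  rw [sSup_eq_iSup'] at ha ⊢
  refine Submodule.iSup_induction _ (motive := fun x ↦ bracket z x ∈ _) ha ?_ ?_ ?_
  · exact fun I x hx ↦ Submodule.mem_iSup_of_mem I (hs I I.2 z x hx)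
  · simp only [bracket_zero hadd_r, zero_mem]
  · exact fun x y hx hy ↦ by simpa only [hadd_r] using add_mem hx hy

theorem isPoissonIdeal_poissonCore
    (hadd_r : ∀ a b c : R, bracket a (b + c) = bracket a b + bracket a c) (m : Ideal R) :
    IsPoissonIdeal bracket (poissonCore bracket m) :=
  isPoissonIdeal_sSup hadd_r fun _ hQ ↦ hQ.1

theorem poissonCore_le (m : Ideal R) : poissonCore bracket m ≤ m :=
  sSup_le fun _ hQ ↦ hQ.2

theorem le_poissonCore {m Q : Ideal R} (hQ : IsPoissonIdeal bracket Q) (hQm : Q ≤ m) :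
    Q ≤ poissonCore bracket m :=
  le_sSup ⟨hQ, hQm⟩

theorem IsPoissonIdeal.eq_sInf_poissonCore [IsJacobsonRing R] {I : Ideal R}
    (hI : IsPoissonIdeal bracket I) (hrad : I.IsRadical) :
    I = sInf (poissonCore bracket '' {m : Ideal R | I ≤ m ∧ m.IsMaximal}) := by
  refine le_antisymm (le_sInf ?_) ?_
  · rintro _ ⟨m, hm, rfl⟩
    exact le_poissonCore hI hm.1
  · calc sInf (poissonCore bracket '' {m : Ideal R | I ≤ m ∧ m.IsMaximal})
        ≤ I.jacobson := le_sInf fun m hm ↦ (sInf_le (Set.mem_image_of_mem _ hm)).trans (poissonCore_le m)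
      _ = I := IsJacobsonRing.out inferInstance hrad

end Poisson

open Poisson in
theorem prime_poisson_ideal_is_intersection_of_poisson_primitives_general
    (k : Type*) [Field k]
    (Z₀ : Type*) [CommRing Z₀] [Algebra k Z₀] [Algebra.FiniteType k Z₀]
    (bracket : Z₀ → Z₀ → Z₀)
    (hadd_r : ∀ a b c : Z₀, bracket a (b + c) = bracket a b + bracket a c)
    (p : Ideal Z₀) (hp : p.IsPrime)
    (hppoisson : ∀ z : Z₀, ∀ a ∈ p, bracket z a ∈ p) :
    ∃ S : Set (Ideal Z₀),
      (∀ q ∈ S, ∃ m : Ideal Z₀, m.IsMaximal ∧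
        (∀ z : Z₀, ∀ a ∈ q, bracket z a ∈ q) ∧ q ≤ m ∧
        (∀ Q : Ideal Z₀, (∀ z : Z₀, ∀ a ∈ Q, bracket z a ∈ Q) → Q ≤ m → Q ≤ q)) ∧
      p = sInf S := by
  have : IsJacobsonRing Z₀ := isJacobsonRing_of_finiteType (A := k)
  refine ⟨poissonCore bracket '' {m | p ≤ m ∧ m.IsMaximal}, ?_,
    IsPoissonIdeal.eq_sInf_poissonCore hppoisson hp.isRadical⟩
  rintro _ ⟨m, ⟨-, hm⟩, rfl⟩
  exact ⟨m, hm, isPoissonIdeal_poissonCore hadd_r m, poissonCore_le m,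
    fun _ hQ hQm ↦ le_poissonCore hQ hQm⟩

/-- In an affine commutative Poisson algebra over a field, every prime Poisson ideal is an
intersection of Poisson primitive ideals (Poisson cores of maximal ideals). -/
theorem prime_poisson_ideal_is_intersection_of_poisson_primitives
    (k : Type*) [Field k]
    (Z₀ : Type*) [CommRing Z₀] [Algebra k Z₀] [Algebra.FiniteType k Z₀]
    (bracket : Z₀ → Z₀ → Z₀)
    (hadd_l : ∀ a b c : Z₀, bracket (a + b) c = bracket a c + bracket b c)
    (hadd_r : ∀ a b c : Z₀, bracket a (b + c) = bracket a b + bracket a c)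
    (hsmul_l : ∀ (r : k) (a b : Z₀), bracket (r • a) b = r • bracket a b)
    (hsmul_r : ∀ (r : k) (a b : Z₀), bracket a (r • b) = r • bracket a b)
    (hleib_r : ∀ a b c : Z₀, bracket a (b * c) = bracket a b * c + b * bracket a c)
    (hanti : ∀ a b : Z₀, bracket a b = - bracket b a)
    (p : Ideal Z₀) (hp : p.IsPrime)
    (hppoisson : ∀ z : Z₀, ∀ a ∈ p, bracket z a ∈ p) :
    ∃ S : Set (Ideal Z₀),
      (∀ q ∈ S, ∃ m : Ideal Z₀, m.IsMaximal ∧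
        (∀ z : Z₀, ∀ a ∈ q, bracket z a ∈ q) ∧ q ≤ m ∧
        (∀ Q : Ideal Z₀, (∀ z : Z₀, ∀ a ∈ Q, bracket z a ∈ Q) → Q ≤ m → Q ≤ q)) ∧
      p = sInf S :=
  prime_poisson_ideal_is_intersection_of_poisson_primitives_general k Z₀ bracket hadd_r p hp
    hppoisson
end

section
/- If an affine commutative Poisson algebra Z₀ has only finitely many Poisson primitive ideals, then every prime Poisson ideal of Z₀ is Poisson primitive, and in particular the set of prime Poisson ideals is finite. -/
/-! The Poisson core `P(m)` of a maximal ideal `m` is the largest Poisson ideal inside `m`, so a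
Poisson prime `p` lies in `P(m)` for every maximal `m ⊇ p`. As `Z₀` is Jacobson, `p` is the
intersection of these `m`, hence also of the `P(m)`. The `P(m)` are Poisson primitive, so there
are finitely many of them, and a prime containing a finite intersection of ideals contains one of
them; hence `p = P(m)`. -/

theorem Ideal.IsPrime.exists_le_of_sInf_le {R : Type*} [CommRing R] {P : Ideal R}
    (hP : P.IsPrime) {T : Set (Ideal R)} (hT : T.Finite) (h : sInf T ≤ P) : ∃ I ∈ T, I ≤ P := by
  classical
  rw [← hT.coe_toFinset, ← Finset.inf_id_eq_sInf, hP.inf_le'] at h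
  simpa using h

section PoissonCore

variable {R : Type*} [CommRing R] (bracket : R → R → R)

def IsPoissonIdeal (I : Ideal R) : Prop :=
  ∀ z : R, ∀ a ∈ I, bracket z a ∈ I

def poissonCore (m : Ideal R) : Ideal R :=
  sSup {I : Ideal R | IsPoissonIdeal bracket I ∧ I ≤ m}

variable {bracket}

theorem isPoissonIdeal_bot (hadd : ∀ a b c : R, bracket a (b + c) = bracket a b + bracket a c) :
    IsPoissonIdeal bracket ⊥ := by
  intro z a ha
  rw [Ideal.mem_bot] at ha ⊢
  have h := hadd z 0 0
  rw [ha]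
  simpa using h.symm

theorem IsPoissonIdeal.sup (hadd : ∀ a b c : R, bracket a (b + c) = bracket a b + bracket a c)
    {I J : Ideal R} (hI : IsPoissonIdeal bracket I) (hJ : IsPoissonIdeal bracket J) :
    IsPoissonIdeal bracket (I ⊔ J) := by
  intro z a ha
  obtain ⟨x, hx, y, hy, rfl⟩ := Submodule.mem_sup.mp ha
  rw [hadd]
  exact Submodule.add_mem_sup (hI z x hx) (hJ z y hy)

theorem isPoissonIdeal_poissonCore
    (hadd : ∀ a b c : R, bracket a (b + c) = bracket a b + bracket a c) (m : Ideal R) :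
    IsPoissonIdeal bracket (poissonCore bracket m) := by
  set S := {I : Ideal R | IsPoissonIdeal bracket I ∧ I ≤ m}
  have hne : S.Nonempty := ⟨⊥, isPoissonIdeal_bot hadd, bot_le⟩
  have hdir : DirectedOn (· ≤ ·) S :=
    fun I hI J hJ ↦ ⟨I ⊔ J, ⟨hI.1.sup hadd hJ.1, sup_le hI.2 hJ.2⟩, le_sup_left, le_sup_right⟩
  intro z a ha
  obtain ⟨I, hI, haI⟩ := (Submodule.mem_sSup_of_directed hne hdir).mp ha
  exact le_sSup hI (hI.1 z a haI)

theorem poissonCore_le (m : Ideal R) : poissonCore bracket m ≤ m :=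
  sSup_le fun _ hI ↦ hI.2

theorem le_poissonCore {I m : Ideal R} (hI : IsPoissonIdeal bracket I) (hIm : I ≤ m) :
    I ≤ poissonCore bracket m :=
  le_sSup ⟨hI, hIm⟩

theorem Ideal.IsPrime.exists_poissonCore_eq [IsJacobsonRing R] {p : Ideal R} (hp : p.IsPrime)
    (hpP : IsPoissonIdeal bracket p)
    (hfin : (poissonCore bracket '' {m : Ideal R | p ≤ m ∧ m.IsMaximal}).Finite) :
    ∃ m : Ideal R, m.IsMaximal ∧ poissonCore bracket m = p := by
  have hinf : sInf (poissonCore bracket '' {m : Ideal R | p ≤ m ∧ m.IsMaximal}) ≤ p := by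
    conv_rhs => rw [← isJacobsonRing_iff_prime_eq.mp ‹_› p hp]
    exact le_sInf fun m hm ↦ (sInf_le (Set.mem_image_of_mem _ hm)).trans (poissonCore_le m)
  obtain ⟨_, ⟨m, hm, rfl⟩, hmp⟩ := hp.exists_le_of_sInf_le hfin hinf
  exact ⟨m, hm.2, le_antisymm hmp (le_poissonCore hpP hm.1)⟩

end PoissonCore

theorem finitely_many_poisson_primitives_general
    (k : Type*) [Field k]
    (Z₀ : Type*) [CommRing Z₀] [Algebra k Z₀] [Algebra.FiniteType k Z₀]
    (bracket : Z₀ → Z₀ → Z₀)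
    (hadd_r : ∀ a b c : Z₀, bracket a (b + c) = bracket a b + bracket a c)
    (PoissonPrimitive : Ideal Z₀ → Prop)
    (hPP : ∀ p : Ideal Z₀, PoissonPrimitive p ↔
      ∃ m : Ideal Z₀, m.IsMaximal ∧
        (∀ z : Z₀, ∀ a ∈ p, bracket z a ∈ p) ∧ p ≤ m ∧
        (∀ Q : Ideal Z₀, (∀ z : Z₀, ∀ a ∈ Q, bracket z a ∈ Q) → Q ≤ m → Q ≤ p))
    (hfin : {p : Ideal Z₀ | PoissonPrimitive p}.Finite) :
    (∀ p : Ideal Z₀, p.IsPrime → (∀ z : Z₀, ∀ a ∈ p, bracket z a ∈ p) →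
      PoissonPrimitive p) ∧
    {p : Ideal Z₀ | p.IsPrime ∧ ∀ z : Z₀, ∀ a ∈ p, bracket z a ∈ p}.Finite := by
  have : IsJacobsonRing Z₀ := isJacobsonRing_of_finiteType (A := k)
  have core_primitive : ∀ m : Ideal Z₀, m.IsMaximal → PoissonPrimitive (poissonCore bracket m) :=
    fun m hm ↦ (hPP _).mpr ⟨m, hm, isPoissonIdeal_poissonCore hadd_r m, poissonCore_le m,
      fun _ hQ hQm ↦ le_poissonCore hQ hQm⟩
  have prime_primitive : ∀ p : Ideal Z₀, p.IsPrime → IsPoissonIdeal bracket p →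
      PoissonPrimitive p := by
    intro p hp hpP
    have hcores : (poissonCore bracket '' {m : Ideal Z₀ | p ≤ m ∧ m.IsMaximal}).Finite :=
      hfin.subset (Set.image_subset_iff.mpr fun m hm ↦ core_primitive m hm.2)
    obtain ⟨m, hm, rfl⟩ := hp.exists_poissonCore_eq hpP hcores
    exact core_primitive m hm
  exact ⟨prime_primitive, hfin.subset fun p hp ↦ prime_primitive p hp.1 hp.2⟩

/-- If an affine commutative Poisson algebra `Z₀` over a field of characteristic `0` has only
finitely many Poisson primitive ideals, then every prime Poisson ideal of `Z₀` is Poisson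
primitive, and in particular the set of prime Poisson ideals is finite. -/
theorem finitely_many_poisson_primitives
    (k : Type*) [Field k] [CharZero k]
    (Z₀ : Type*) [CommRing Z₀] [Algebra k Z₀] [Algebra.FiniteType k Z₀]
    (bracket : Z₀ → Z₀ → Z₀)
    (hadd_l : ∀ a b c : Z₀, bracket (a + b) c = bracket a c + bracket b c)
    (hadd_r : ∀ a b c : Z₀, bracket a (b + c) = bracket a b + bracket a c)
    (hsmul_l : ∀ (r : k) (a b : Z₀), bracket (r • a) b = r • bracket a b)
    (hsmul_r : ∀ (r : k) (a b : Z₀), bracket a (r • b) = r • bracket a b)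
    (hleib_r : ∀ a b c : Z₀, bracket a (b * c) = bracket a b * c + b * bracket a c)
    (hanti : ∀ a b : Z₀, bracket a b = - bracket b a)
    (PoissonPrimitive : Ideal Z₀ → Prop)
    (hPP : ∀ p : Ideal Z₀, PoissonPrimitive p ↔
      ∃ m : Ideal Z₀, m.IsMaximal ∧
        (∀ z : Z₀, ∀ a ∈ p, bracket z a ∈ p) ∧ p ≤ m ∧
        (∀ Q : Ideal Z₀, (∀ z : Z₀, ∀ a ∈ Q, bracket z a ∈ Q) → Q ≤ m → Q ≤ p))
    (hfin : {p : Ideal Z₀ | PoissonPrimitive p}.Finite) :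
    (∀ p : Ideal Z₀, p.IsPrime → (∀ z : Z₀, ∀ a ∈ p, bracket z a ∈ p) →
      PoissonPrimitive p) ∧
    {p : Ideal Z₀ | p.IsPrime ∧ ∀ z : Z₀, ∀ a ∈ p, bracket z a ∈ p}.Finite :=
  finitely_many_poisson_primitives_general k Z₀ bracket hadd_r PoissonPrimitive hPP hfin
end

section
/- Let Z₀ be an integrally closed-free setting: Z₀ is a commutative Poisson C-algebra with Cas(Z₀) = C, and Z ⊇ Z₀ is a commutative Poisson algebra extension that is integral over Z₀ and a domain of characteristic 0. Then any p ∈ Z₀ satisfying {p, Z₀} = 0 also satisfies {p, Z} = 0. (Casimirs of the subalgebra are Casimirs of the integral extension.) -/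
/-- Let `Z` be a commutative Poisson `ℂ`-algebra which is a domain, and `Z₀ ⊆ Z` a Poisson
subalgebra over which `Z` is integral. Then any `p ∈ Z₀` with `{p, Z₀} = 0` satisfies
`{p, Z} = 0`: Casimirs of the subalgebra are Casimirs of the integral extension. -/
theorem casimir_of_subalgebra_is_casimir_of_integral_extension
    (Z : Type*) [CommRing Z] [IsDomain Z] [Algebra ℂ Z]
    (bracket : Z → Z → Z)
    (hadd_l : ∀ a b c : Z, bracket (a + b) c = bracket a c + bracket b c)
    (hadd_r : ∀ a b c : Z, bracket a (b + c) = bracket a b + bracket a c)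
    (hsmul_r : ∀ (r : ℂ) (a b : Z), bracket a (r • b) = r • bracket a b)
    (hleib_r : ∀ a b c : Z, bracket a (b * c) = bracket a b * c + b * bracket a c)
    (hanti : ∀ a b : Z, bracket a b = - bracket b a)
    (Z₀ : Subalgebra ℂ Z)
    (hZ₀poisson : ∀ a ∈ Z₀, ∀ b ∈ Z₀, bracket a b ∈ Z₀)
    (hintegral : ∀ u : Z, IsIntegral Z₀ u)
    (p : Z) (hp : p ∈ Z₀) (hcas : ∀ z₀ ∈ Z₀, bracket p z₀ = 0) :
    ∀ u : Z, bracket p u = 0 := by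
  intro u
  haveI : CharZero Z := charZero_of_injective_algebraMap (algebraMap ℂ Z).injective
  -- the bracket with p is a derivation killing Z₀; compute it on powers of u
  have hpow : ∀ n : ℕ, bracket p (u ^ (n + 1)) = (n + 1 : ℕ) * u ^ n * bracket p u := by
    intro n
    induction n with
    | zero => simp
    | succ m ih =>
      have h2 : u ^ (m + 2) = u * u ^ (m + 1) := by ring
      rw [h2, hleib_r, ih]
      push_cast
      ring
  -- and on evaluations of polynomials with coefficients in Z₀
  have hder : ∀ f : Polynomial Z₀,
      bracket p (Polynomial.aeval u f) =
        Polynomial.aeval u (Polynomial.derivative f) * bracket p u := by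
    intro f
    induction f using Polynomial.induction_on' with
    | add f g hf hg =>
      rw [Polynomial.derivative_add, map_add,
        map_add, hadd_r, hf, hg, add_mul]
    | monomial n a =>
      rw [Polynomial.aeval_monomial, Polynomial.derivative_monomial,
        Polynomial.aeval_monomial]
      cases n with
      | zero =>
        simp only [pow_zero, mul_one, Nat.cast_zero, mul_zero,
          Polynomial.monomial_zero_right, map_zero, zero_mul]
        exact hcas _ a.2
      | succ m =>
        rw [hleib_r]
        have h0 : bracket p ((algebraMap Z₀ Z) a) = 0 := hcas _ a.2
        rw [h0, hpow m]
        simp only [Nat.add_sub_cancel]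
        push_cast
        ring
  -- minimal polynomial
  set q := minpoly Z₀ u with hqdef
  have hqmonic : q.Monic := minpoly.monic (hintegral u)
  have hq0 : Polynomial.aeval u q = 0 := minpoly.aeval Z₀ u
  have hnpos : 0 < q.natDegree := minpoly.natDegree_pos (hintegral u)
  obtain ⟨m, hm⟩ : ∃ m, q.natDegree = m + 1 :=
    ⟨q.natDegree - 1, (Nat.succ_pred_eq_of_pos hnpos).symm⟩
  have hcoeff : (Polynomial.derivative q).coeff m = ((m : Z₀) + 1) := by
    rw [Polynomial.coeff_derivative, ← hm, hqmonic.coeff_natDegree]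
    push_cast
    ring
  have hmain : Polynomial.aeval u (Polynomial.derivative q) * bracket p u = 0 := by
    rw [← hder, hq0]
    simpa using hcas 0 (zero_mem Z₀)
  have hne : Polynomial.aeval u (Polynomial.derivative q) ≠ 0 := by
    intro hzero
    -- build a monic annihilating polynomial of smaller degree
    have hcne : ((m : ℂ) + 1) ≠ 0 := Nat.cast_add_one_ne_zero m
    set c : Z₀ := algebraMap ℂ Z₀ ((m : ℂ) + 1)⁻¹ with hc
    set r : Polynomial Z₀ := Polynomial.C c * Polynomial.derivative q with hr
    have hrdeg : r.natDegree ≤ m := by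
      refine le_trans (Polynomial.natDegree_C_mul_le c _) ?_
      have := Polynomial.natDegree_derivative_le q
      omega
    have hrcoeff : r.coeff m = 1 := by
      rw [hr, Polynomial.coeff_C_mul, hcoeff, hc]
      have hcast : ((m : Z₀) + 1) = algebraMap ℂ Z₀ ((m : ℂ) + 1) := by
        push_cast
        simp
      rw [hcast, ← map_mul, inv_mul_cancel₀ hcne, map_one]
    have hrmonic : r.Monic :=
      Polynomial.monic_of_natDegree_le_of_coeff_eq_one m hrdeg hrcoeff
    have hraeval : Polynomial.aeval u r = 0 := by
      rw [hr, map_mul, hzero, mul_zero]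
    have hmin := minpoly.min Z₀ u hrmonic hraeval
    rw [← hqdef] at hmin
    have := Polynomial.natDegree_le_natDegree hmin
    omega
  exact (mul_eq_zero.mp hmain).resolve_left hne
end
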